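/- arXiv:2504.17835 — 2 statements merged into one kernel-verified Lean document; each statement's English description precedes it below -/
import Mathlib

section
/- For each k = 1,…,6, the image φ_{k,1}(𝔻) of the closed unit disk is a closed disk of radius (2√3−3)/3, and its center c_k satisfies |c_k| = (4√3−6)/3; i.e., there exists c_k ∈ ℂ with |c_k| = (4√3−6)/3 such that φ_{k,1}(𝔻) is the closed ball of center c_k and radius (2√3−3)/3. -/
open Complex Metric Set
open scoped ENNReal

noncomputable section

/-- λ = √3 -/
def lam : ℝ := Real.sqrt 3

/-- The Möbius map f(z) = ((λ−1)z+1)/(−z+λ+1). -/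
def apolF : ℂ → ℂ := fun z => (((lam : ℂ) - 1) * z + 1) / (-z + (lam : ℂ) + 1)

/-- Rotation by angle θ. -/
def Rot (θ : ℝ) : ℂ → ℂ := fun z => Complex.exp ((θ : ℂ) * Complex.I) * z

/-- θ_k = (−1)^k · 2π/3 -/
def thetaA (k : ℕ) : ℝ := (-1 : ℝ) ^ k * (2 * Real.pi / 3)

/-- θ'_k = 2πk/3 -/
def thetaB (k : ℕ) : ℝ := 2 * Real.pi * k / 3

/-- The Apollonian generators φ_{k,n} = R_{θ'_k} ∘ f^n ∘ R_{θ_k} ∘ f. -/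
def phi (k n : ℕ) : ℂ → ℂ := Rot (thetaB k) ∘ (apolF^[n]) ∘ Rot (thetaA k) ∘ apolF

/-- The closed unit disk 𝔻. -/
def unitD : Set ℂ := Metric.closedBall (0 : ℂ) 1

/-!
`f ∘ R_θ ∘ f` is the Möbius map of the product of the matrices of its factors. A Möbius map
`z ↦ (az + b)/(cz + d)` with `|c| < |d|` sends `𝔻` onto the closed disk of center
`(b d̄ - a c̄)/(|d|² - |c|²)` and radius `|ad - bc|/(|d|² - |c|²)`, because
`|d̄z + c̄|² - |cz + d|² = (|d|² - |c|²)(|z|² - 1)`. For `θ = θ_k`, `ω = e^{iθ}` is a primitive cube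
root of unity, and with `λ² = 3` these formulas give the center `(4 - 2λ)/3 · (ω + 2)`, of modulus
`(4λ - 6)/3`, and the radius `(2λ - 3)/3`. The final rotation `R_{θ'_k}` moves the center along a
circle about `0`.
-/

open scoped ComplexConjugate Pointwise

def mobius (a b c d z : ℂ) : ℂ := (a * z + b) / (c * z + d)

namespace mobius

variable {a b c d : ℂ}

def diskCenter (a b c d : ℂ) : ℂ :=
  (b * conj d - a * conj c) / ((normSq d - normSq c : ℝ) : ℂ)

def diskRadius (a b c d : ℂ) : ℝ := ‖a * d - b * c‖ / (normSq d - normSq c)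

lemma comp_apply {a' b' c' d' z : ℂ} (hz : c' * z + d' ≠ 0) :
    mobius a b c d (mobius a' b' c' d' z) =
      mobius (a * a' + b * c') (a * b' + b * d') (c * a' + d * c') (c * b' + d * d') z := by
  unfold mobius
  rw [mul_div_assoc', div_add' _ _ _ hz, mul_div_assoc', div_add' _ _ _ hz,
    div_div_div_cancel_right₀ hz]
  congr 1 <;> ring

lemma mul_apply (u z : ℂ) : u * mobius a b c d z = mobius (u * a) (u * b) c d z := by
  rw [mobius, mobius, mul_div_assoc']
  ring_nf

lemma denom_ne_zero {z : ℂ} (hcd : ‖c‖ < ‖d‖) (hz : ‖z‖ ≤ 1) : c * z + d ≠ 0 := by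
  intro h
  have : ‖d‖ ≤ ‖c‖ := calc
    ‖d‖ = ‖c‖ * ‖z‖ := by rw [eq_neg_of_add_eq_zero_right h, norm_neg, norm_mul]
    _ ≤ ‖c‖ := mul_le_of_le_one_right (norm_nonneg c) hz
  linarith

lemma normSq_conj_mul_add_sub_normSq_mul_add (c d z : ℂ) :
    normSq (conj d * z + conj c) - normSq (c * z + d) =
      (normSq d - normSq c) * (normSq z - 1) := by
  simp only [normSq_apply, add_re, add_im, mul_re, mul_im, conj_re, conj_im]
  ring

lemma sub_diskCenter {z : ℂ} (hs : normSq d - normSq c ≠ 0) (hz : c * z + d ≠ 0) :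
    mobius a b c d z - diskCenter a b c d =
      (a * d - b * c) * (conj d * z + conj c) /
        ((c * z + d) * ((normSq d - normSq c : ℝ) : ℂ)) := by
  have hs' : ((normSq d - normSq c : ℝ) : ℂ) ≠ 0 := by exact_mod_cast hs
  rw [mobius, diskCenter, div_sub_div _ _ hz hs']
  congr 1
  push_cast
  rw [← mul_conj, ← mul_conj]
  ring

lemma normSq_sub_normSq_pos (hcd : ‖c‖ < ‖d‖) : 0 < normSq d - normSq c := by
  rw [← Complex.sq_norm, ← Complex.sq_norm]
  nlinarith [norm_nonneg c]

lemma norm_sub_diskCenter_le_iff {z : ℂ} (hcd : ‖c‖ < ‖d‖) (hdet : a * d - b * c ≠ 0)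
    (hz : c * z + d ≠ 0) :
    ‖mobius a b c d z - diskCenter a b c d‖ ≤ diskRadius a b c d ↔ ‖z‖ ≤ 1 := by
  have hs := normSq_sub_normSq_pos hcd
  have hdet' : 0 < ‖a * d - b * c‖ := norm_pos_iff.mpr hdet
  have key : ‖conj d * z + conj c‖ ≤ ‖c * z + d‖ ↔ ‖z‖ ≤ 1 := by
    rw [← sq_le_sq₀ (norm_nonneg _) (norm_nonneg _), Complex.sq_norm, Complex.sq_norm,
      ← sub_nonpos, normSq_conj_mul_add_sub_normSq_mul_add, ← mul_zero (normSq d - normSq c),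
      mul_le_mul_iff_of_pos_left hs, sub_nonpos, ← Complex.sq_norm, sq_le_one_iff₀ (norm_nonneg z)]
  rw [sub_diskCenter hs.ne' hz, norm_div, norm_mul, norm_mul, norm_real,
    Real.norm_of_nonneg hs.le, diskRadius, mul_comm ‖c * z + d‖, ← div_mul_div_comm,
    mul_le_iff_le_one_right (by positivity), div_le_one (norm_pos_iff.mpr hz), key]

-- `a / c` is the value of the map at `∞`, so it lies outside the image of the disk.
lemma diskRadius_lt_norm_div_sub_diskCenter (hcd : ‖c‖ < ‖d‖) (hdet : a * d - b * c ≠ 0)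
    (hc : c ≠ 0) : diskRadius a b c d < ‖a / c - diskCenter a b c d‖ := by
  have hs := normSq_sub_normSq_pos hcd
  have hs' : ((normSq d - normSq c : ℝ) : ℂ) ≠ 0 := by exact_mod_cast hs.ne'
  have key : a / c - diskCenter a b c d =
      conj d * (a * d - b * c) / (c * ((normSq d - normSq c : ℝ) : ℂ)) := by
    rw [diskCenter, div_sub_div _ _ hc hs']
    congr 1
    push_cast
    rw [← mul_conj, ← mul_conj]
    ring
  rw [key, norm_div, norm_mul, norm_mul, norm_conj, norm_real, Real.norm_of_nonneg hs.le,
    diskRadius, div_lt_div_iff₀ hs (by positivity)]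
  nlinarith [mul_pos (norm_pos_iff.mpr hdet) hs]

theorem image_closedBall_zero_one (hcd : ‖c‖ < ‖d‖) (hdet : a * d - b * c ≠ 0) :
    mobius a b c d '' closedBall 0 1 = closedBall (diskCenter a b c d) (diskRadius a b c d) := by
  ext w
  simp only [mem_image, mem_closedBall, dist_zero_right, dist_eq]
  constructor
  · rintro ⟨z, hz, rfl⟩
    exact (norm_sub_diskCenter_le_iff hcd hdet (denom_ne_zero hcd hz)).2 hz
  intro hw
  have hpole : -c * w + a ≠ 0 := by
    rcases eq_or_ne c 0 with rfl | hc
    · simpa using (show a ≠ 0 ∧ d ≠ 0 by simpa using hdet).1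
    · intro h
      have hwc : w = a / c := by field_simp; linear_combination -h
      exact (diskRadius_lt_norm_div_sub_diskCenter hcd hdet hc).not_ge (hwc ▸ hw)
  have hden : c * mobius d (-b) (-c) a w + d = (a * d - b * c) / (-c * w + a) := by
    rw [mobius, mul_div_assoc', div_add' _ _ _ hpole]
    congr 1
    ring
  have hinv : mobius a b c d (mobius d (-b) (-c) a w) = w := calc
    _ = (a * d - b * c) * w / (a * d - b * c) := by
      rw [comp_apply hpole, mobius]
      congr 1 <;> ring
    _ = w := mul_div_cancel_left₀ w hdet
  refine ⟨_, ?_, hinv⟩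
  exact (norm_sub_diskCenter_le_iff hcd hdet (hden ▸ div_ne_zero hdet hpole)).1 (by rwa [hinv])

end mobius

lemma lam_sq : lam ^ 2 = 3 := Real.sq_sqrt (by norm_num)

lemma ofReal_lam_sq : (lam : ℂ) ^ 2 = 3 := by exact_mod_cast lam_sq

lemma one_lt_lam : 1 < lam := by
  rw [lam, Real.lt_sqrt zero_le_one]
  norm_num

lemma apolF_eq_mobius : apolF = mobius (lam - 1) 1 (-1) (lam + 1) := by
  ext z
  rw [apolF, mobius]
  ring_nf

section CubeRoot

variable {ω : ℂ}

lemma conj_eq_neg_one_sub_of_re_eq (hre : ω.re = -1 / 2) : conj ω = -1 - ω := by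
  have h := add_conj ω
  rw [hre] at h
  push_cast at h
  linear_combination h

lemma sq_add_self_add_one_of_re_eq (hω : ‖ω‖ = 1) (hre : ω.re = -1 / 2) :
    ω ^ 2 + ω + 1 = 0 := by
  have h : ω * conj ω = 1 := by
    rw [mul_conj, ← Complex.sq_norm, hω]
    norm_num
  rw [conj_eq_neg_one_sub_of_re_eq hre] at h
  linear_combination -h

lemma norm_add_two_of_re_eq (hω : ‖ω‖ = 1) (hre : ω.re = -1 / 2) :
    ‖ω + 2‖ = Real.sqrt 3 := by
  have h := Complex.sq_norm ω
  rw [← Real.sqrt_sq (norm_nonneg _), Complex.sq_norm]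
  simp only [normSq_apply, add_re, add_im, re_ofNat, im_ofNat] at h ⊢
  rw [hω, hre] at h
  rw [hre]
  congr 1
  linarith

end CubeRoot

lemma eqOn_apolF_mul_apolF (ω : ℂ) :
    EqOn (fun z => apolF (ω * apolF z))
      (mobius ((lam - 1) ^ 2 * ω - 1) ((lam - 1) * ω + (lam + 1))
        (-((lam - 1) * ω + (lam + 1))) ((lam + 1) ^ 2 - ω)) unitD := by
  intro z hz
  rw [unitD, mem_closedBall_zero_iff] at hz
  have hpole : -1 * z + (lam + 1) ≠ 0 := by
    refine mobius.denom_ne_zero ?_ hz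
    rw [norm_neg, norm_one, ← ofReal_one, ← ofReal_add, norm_real, Real.norm_of_nonneg]
    all_goals linarith [one_lt_lam]
  show apolF (ω * apolF z) = _
  rw [apolF_eq_mobius, mobius.mul_apply, mobius.comp_apply hpole]
  congr 1 <;> ring

lemma image_apolF_mul_apolF {ω : ℂ} (hω : ‖ω‖ = 1) (hre : ω.re = -1 / 2) :
    (fun z => apolF (ω * apolF z)) '' unitD =
      closedBall ((4 - 2 * lam) / 3 * (ω + 2)) ((2 * lam - 3) / 3) := by
  set A : ℂ := (lam - 1) ^ 2 * ω - 1
  set B : ℂ := (lam - 1) * ω + (lam + 1)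
  set D : ℂ := (lam + 1) ^ 2 - ω
  have hconj := conj_eq_neg_one_sub_of_re_eq hre
  have hquad := sq_add_self_add_one_of_re_eq hω hre
  have hl := ofReal_lam_sq
  have hB : normSq B = 6 := by
    have : (normSq B : ℂ) = 6 := by
      rw [← mul_conj]
      simp only [B, map_add, map_mul, map_sub, map_one, conj_ofReal, hconj]
      linear_combination (-((lam : ℂ) - 1) ^ 2) * hquad + hl
    exact_mod_cast this
  have hD : normSq D = 33 + 18 * lam := by
    have : (normSq D : ℂ) = 33 + 18 * lam := by
      rw [← mul_conj]
      simp only [D, map_add, map_pow, map_sub, map_one, conj_ofReal, hconj]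
      linear_combination (-1 : ℂ) * hquad + ((lam : ℂ) ^ 2 + 4 * lam + 10) * hl
    exact_mod_cast this
  have hdet : A * D - B * (-B) = 9 * ω := by
    linear_combination ω * ((lam : ℂ) ^ 2 + 3) * hl
  have hcenter : B * conj D - A * conj (-B) = 6 * lam * (ω + 2) := by
    simp only [A, B, D, map_add, map_mul, map_pow, map_sub, map_neg, map_one, conj_ofReal, hconj]
    grind
  have hcd : ‖-B‖ < ‖D‖ := by
    rw [norm_neg, ← sq_lt_sq₀ (norm_nonneg _) (norm_nonneg _), Complex.sq_norm, Complex.sq_norm,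
      hB, hD]
    linarith [one_lt_lam]
  have hdet0 : A * D - B * (-B) ≠ 0 := by
    rw [hdet]
    exact mul_ne_zero (by norm_num) (norm_ne_zero_iff.mp (by rw [hω]; norm_num))
  have hs : normSq D - normSq (-B) = 9 * (3 + 2 * lam) := by
    rw [normSq_neg, hB, hD]
    ring
  have hs0 : 0 < 3 + 2 * lam := by linarith [one_lt_lam]
  rw [(eqOn_apolF_mul_apolF ω).image_eq, unitD,
    mobius.image_closedBall_zero_one hcd hdet0, mobius.diskCenter, mobius.diskRadius, hcenter,
    hdet, hs]
  congr 1
  · rw [div_eq_iff (ofReal_ne_zero.mpr (by positivity))]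
    push_cast
    linear_combination 12 * (ω + 2) * hl
  · rw [norm_mul, hω, mul_one, Complex.norm_ofNat, div_eq_div_iff (by positivity) three_ne_zero]
    linear_combination (-36) * lam_sq

lemma re_exp_thetaA (k : ℕ) : (exp (thetaA k * I)).re = -1 / 2 := by
  have hcos : Real.cos (2 * Real.pi / 3) = -1 / 2 := by
    rw [show 2 * Real.pi / 3 = Real.pi - Real.pi / 3 by ring, Real.cos_pi_sub,
      Real.cos_pi_div_three]
    norm_num
  rw [exp_ofReal_mul_I_re, thetaA]
  rcases neg_one_pow_eq_or ℝ k with h | h <;> simp [h, hcos]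

lemma phi_one_image_unitD (k : ℕ) :
    phi k 1 '' unitD =
      exp (thetaB k * I) • (fun z => apolF (exp (thetaA k * I) * apolF z)) '' unitD := by
  rw [← image_smul, image_image]
  rfl

theorem apollonian_first_disk_general (k : ℕ) :
    ∃ c : ℂ, ‖c‖ = (4 * Real.sqrt 3 - 6) / 3 ∧
      phi k 1 '' unitD = Metric.closedBall c ((2 * Real.sqrt 3 - 3) / 3) := by
  have hω := norm_exp_ofReal_mul_I (thetaA k)
  have hζ := norm_exp_ofReal_mul_I (thetaB k)
  rw [phi_one_image_unitD, image_apolF_mul_apolF hω (re_exp_thetaA k),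
    smul_closedBall' (norm_ne_zero_iff.mp (by rw [hζ]; norm_num)), hζ, one_mul]
  refine ⟨_, ?_, rfl⟩
  have hlam : lam ≤ 2 := by nlinarith [lam_sq, one_lt_lam]
  rw [smul_eq_mul, norm_mul, hζ, one_mul, norm_mul, norm_add_two_of_re_eq hω (re_exp_thetaA k),
    show ((4 - 2 * lam) / 3 : ℂ) = ((4 - 2 * lam) / 3 : ℝ) by push_cast; rfl, norm_real,
    Real.norm_of_nonneg (by linarith), ← lam]
  linear_combination (-2 / 3) * lam_sq

/-- φ_{k,1}(𝔻) is a closed disk of radius (2√3−3)/3 whose center c_k satisfies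
|c_k| = (4√3−6)/3. -/
theorem apollonian_first_disk (k : ℕ) (hk1 : 1 ≤ k) (hk6 : k ≤ 6) :
    ∃ c : ℂ, ‖c‖ = (4 * Real.sqrt 3 - 6) / 3 ∧
      phi k 1 '' unitD = Metric.closedBall c ((2 * Real.sqrt 3 - 3) / 3) :=
  apollonian_first_disk_general k
end
end

section
/- For every positive integer n and every z in the closed unit disk 𝔻, the n-fold composition of f with itself satisfies f^n(z) = ((√3−n)z + n)/(−nz + n + √3). -/
/-! `f` is the Möbius map of `M = λ • 1 + N` with `N = !![-1, 1; -1, 1]` and `N ^ 2 = 0`, so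
`M ^ n = λ ^ (n - 1) • (λ • 1 + n • N)`, which is the claimed formula. On the disk the
denominators `-k z + k + λ` have positive real part, so no iterate passes through a pole. -/

open Complex Metric Set
open scoped ENNReal

noncomputable section

def parabolicMobius {K : Type*} [Field K] (a z : K) : K := ((a - 1) * z + 1) / (-z + a + 1)

theorem parabolicMobius_div {K : Type*} [Field K] (a : K) {p q : K} (hq : q ≠ 0) :
    parabolicMobius a (p / q) = ((a - 1) * p + q) / (-p + (a + 1) * q) := by
  rw [parabolicMobius, ← mul_div_mul_right _ _ hq]
  congr 1 <;> field_simp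
  ring

theorem iterate_parabolicMobius {K : Type*} [Field K] {a z : K} {n : ℕ} (ha : a ≠ 0)
    (hden : ∀ k < n, -(k : K) * z + k + a ≠ 0) :
    (parabolicMobius a)^[n] z = ((a - n) * z + n) / (-n * z + n + a) := by
  induction n with
  | zero => simp [mul_div_cancel_left₀ z ha]
  | succ m ih =>
    rw [Function.iterate_succ_apply', ih fun k hk => hden k (hk.trans m.lt_succ_self),
      parabolicMobius_div a (hden m m.lt_succ_self)]
    conv_rhs => rw [← mul_div_mul_left _ _ ha]
    push_cast
    congr 1 <;> ring

theorem neg_natCast_mul_add_ne_zero_of_re_le_one {z : ℂ} (hz : z.re ≤ 1) {a : ℝ} (ha : 0 < a)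
    (k : ℕ) : -(k : ℂ) * z + k + a ≠ 0 := by
  intro h
  have hre : -(k : ℝ) * z.re + k + a = 0 := by simpa using congrArg re h
  nlinarith [(k.cast_nonneg : (0 : ℝ) ≤ k)]

theorem apollonian_iterate_formula_general (n : ℕ) (z : ℂ) (hz : z ∈ unitD) :
    apolF^[n] z =
      (((Real.sqrt 3 : ℂ) - (n : ℂ)) * z + (n : ℂ)) /
        (-(n : ℂ) * z + (n : ℂ) + (Real.sqrt 3 : ℂ)) := by
  have hre : z.re ≤ 1 := (re_le_norm z).trans (mem_closedBall_zero_iff.mp hz)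
  have hsqrt : 0 < Real.sqrt 3 := by positivity
  exact iterate_parabolicMobius (ofReal_ne_zero.mpr hsqrt.ne')
    fun k _ => neg_natCast_mul_add_ne_zero_of_re_le_one hre hsqrt k

/-- For every n ≥ 1 and z ∈ 𝔻, f^n(z) = ((√3−n)z + n)/(−nz + n + √3). -/
theorem apollonian_iterate_formula (n : ℕ) (hn : 1 ≤ n) (z : ℂ) (hz : z ∈ unitD) :
    apolF^[n] z =
      (((Real.sqrt 3 : ℂ) - (n : ℂ)) * z + (n : ℂ)) /
        (-(n : ℂ) * z + (n : ℂ) + (Real.sqrt 3 : ℂ)) :=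
  apollonian_iterate_formula_general n z hz

end
end
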